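/- arXiv:2405.06688 — 3 statements merged into one kernel-verified Lean document; each statement's English description precedes it below -/
import Mathlib

section
/- Define $S_{t,\nu,l}(d) = 2t^2 + \frac{\nu^2(e^{(2d-2)/l} + e^{-2d/l})}{1 - e^{-2/l}}$ for $t, \nu, l > 0$. If $(t, \nu, l)$ and $(t', \nu', l')$ are triples of positive reals with $S_{t,\nu,l}(d) = S_{t',\nu',l'}(d)$ for $d = 0, 1/4, 1/2$, then $t = t'$, $\nu = \nu'$, and $l = l'$. -/
/-!
Write `q = e^{-1/(2l)} ∈ (0, 1)` and `A = ν² / (1 - q⁴)`. At `d = 0, 1/4, 1/2` the function `S` takes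
the values `2t² + A(1 + q⁴)`, `2t² + A(q + q³)`, `2t² + 2Aq²`, so the two successive differences
are `A(1 - q)²(1 + q + q²)` and `Aq(1 - q)²`. Their quotient `q⁻¹ + 1 + q` does not depend on `t`
or `ν` and is strictly decreasing on `(0, 1)`, which pins down `q` and hence `l`; the differences
then give `A`, hence `ν`, and finally `t`.
-/

/-- The second-moment function `S_{t,ν,l}(d)` of the coupled chain with
exponential interlayer hopping. -/
noncomputable def Smom (t ν l d : ℝ) : ℝ :=
  2 * t ^ 2 + ν ^ 2 * (Real.exp ((2 * d - 2) / l) + Real.exp (-2 * d / l)) /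
    (1 - Real.exp (-2 / l))

open Set

lemma strictAntiOn_add_inv : StrictAntiOn (fun x : ℝ => x + x⁻¹) (Ioc 0 1) := by
  rintro x ⟨hx0, -⟩ y ⟨hy0, hy1⟩ hxy
  have hxy1 : x * y < 1 := by nlinarith
  have key : x + x⁻¹ - (y + y⁻¹) = (y - x) * (1 - x * y) / (x * y) := by
    field_simp; ring
  have hpos : 0 < (y - x) * (1 - x * y) / (x * y) :=
    div_pos (mul_pos (by linarith) (by linarith)) (by positivity)
  show y + y⁻¹ < x + x⁻¹
  linarith

noncomputable def decay (l : ℝ) : ℝ := Real.exp (-(1 / (2 * l)))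

lemma decay_mem_Ioo {l : ℝ} (hl : 0 < l) : decay l ∈ Ioo 0 1 :=
  ⟨Real.exp_pos _, Real.exp_lt_one_iff.mpr (by simp; positivity)⟩

lemma decay_injective : Function.Injective decay := by
  intro a b h
  simpa using Real.exp_injective h

lemma Smom_zero (t ν l : ℝ) :
    Smom t ν l 0 = 2 * t ^ 2 + ν ^ 2 / (1 - decay l ^ 4) * (1 + decay l ^ 4) := by
  simp only [Smom, decay, ← Real.exp_nat_mul, mul_zero, zero_div, Real.exp_zero]
  ring_nf

lemma Smom_one_fourth (t ν l : ℝ) :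
    Smom t ν l (1 / 4) = 2 * t ^ 2 + ν ^ 2 / (1 - decay l ^ 4) * (decay l + decay l ^ 3) := by
  simp only [Smom, decay, ← Real.exp_nat_mul]
  ring_nf

lemma Smom_one_half (t ν l : ℝ) :
    Smom t ν l (1 / 2) = 2 * t ^ 2 + ν ^ 2 / (1 - decay l ^ 4) * (2 * decay l ^ 2) := by
  simp only [Smom, decay, ← Real.exp_nat_mul]
  ring_nf

lemma eq_of_three_moments {x y A B c c' : ℝ} (hx : x ∈ Ioo 0 1) (hy : y ∈ Ioo 0 1)
    (hA : 0 < A)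
    (h0 : c + A * (1 + x ^ 4) = c' + B * (1 + y ^ 4))
    (h1 : c + A * (x + x ^ 3) = c' + B * (y + y ^ 3))
    (h2 : c + A * (2 * x ^ 2) = c' + B * (2 * y ^ 2)) :
    x = y ∧ A = B ∧ c = c' := by
  obtain ⟨hx0, hx1⟩ := hx
  obtain ⟨hy0, hy1⟩ := hy
  have hx1' : 1 - x ≠ 0 := by linarith
  have hy1' : 1 - y ≠ 0 := by linarith
  have d1 : A * ((1 - x) ^ 2 * (1 + x + x ^ 2)) = B * ((1 - y) ^ 2 * (1 + y + y ^ 2)) := by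
    linear_combination h0 - h1
  have d2 : A * (x * (1 - x) ^ 2) = B * (y * (1 - y) ^ 2) := by
    linear_combination h1 - h2
  have hB : B ≠ 0 := by
    rintro rfl
    simp [hA.ne', hx0.ne', hx1'] at d2
  have hratio : x + x⁻¹ = y + y⁻¹ := by
    have := congrArg₂ (· / ·) d1 d2
    field_simp at this
    field_simp
    linear_combination this
  have hxy : x = y :=
    strictAntiOn_add_inv.injOn ⟨hx0, hx1.le⟩ ⟨hy0, hy1.le⟩ hratio
  subst hxy
  have hAB : A = B := mul_right_cancel₀ (by positivity) d2
  subst hAB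
  exact ⟨rfl, rfl, by linarith⟩

/-- equality of `S` at `d = 0, 1/4, 1/2` determines `(t, ν, l)`
among positive triples. -/
theorem stmt6 (t ν l t' ν' l' : ℝ)
    (ht : 0 < t) (hν : 0 < ν) (hl : 0 < l)
    (ht' : 0 < t') (hν' : 0 < ν') (hl' : 0 < l')
    (h0 : Smom t ν l 0 = Smom t' ν' l' 0)
    (h14 : Smom t ν l (1 / 4) = Smom t' ν' l' (1 / 4))
    (h12 : Smom t ν l (1 / 2) = Smom t' ν' l' (1 / 2)) :
    t = t' ∧ ν = ν' ∧ l = l' := by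
  rw [Smom_zero, Smom_zero] at h0
  rw [Smom_one_fourth, Smom_one_fourth] at h14
  rw [Smom_one_half, Smom_one_half] at h12
  have hq := decay_mem_Ioo hl
  have hq4 : 0 < 1 - decay l ^ 4 := sub_pos.mpr (pow_lt_one₀ hq.1.le hq.2 four_ne_zero)
  obtain ⟨hqq, hA, htt⟩ := eq_of_three_moments hq (decay_mem_Ioo hl') (by positivity) h0 h14 h12
  have hll : l = l' := decay_injective hqq
  subst hll
  refine ⟨?_, ?_, rfl⟩
  · exact (pow_left_inj₀ ht.le ht'.le two_ne_zero).mp (by linarith)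
  · exact (pow_left_inj₀ hν.le hν'.le two_ne_zero).mp ((div_left_inj' hq4.ne').mp hA)
end

section
/- Let $P$ be a finite set, let $S : P \times [0,1] \to \mathbb{R}$ be such that for each $p \in P$, $d \mapsto S(p,d)$ is twice continuously differentiable with $|\partial_d^2 S(p,d)| \le c_1$ for all $d \in [0,1]$, and suppose $c_0 := \min_{p \ne p' \in P} \max_{d \in [0,1]} |\partial_d S(p,d) - \partial_d S(p',d)| > 0$. If $N > \max\{1, 3c_1/c_0\}$ is an integer and $d_i = i/N$ for $i = 0, \dots, N$, then the map $p \mapsto (S(p,d_0), \dots, S(p,d_N))$ is injective on $P$. -/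
/-!
If `S p` and `S p'` agree on the grid `i / N`, their difference `h` vanishes at consecutive grid
points, so by Rolle `h'` has a zero in every cell of length `1 / N`. Since `|h''| ≤ 2 c₁`, the
mean value inequality gives `|h'| ≤ 2 c₁ / N < c₀` on all of `[0, 1]`, contradicting the separation
of the derivatives of `S p` and `S p'`.
-/

open Set

theorem exists_nat_lt_mem_Icc_div {d : ℝ} (hd : d ∈ Icc (0 : ℝ) 1) {N : ℕ} (hN : 0 < N) :
    ∃ i : ℕ, i < N ∧ d ∈ Icc ((i : ℝ) / N) ((i + 1 : ℝ) / N) := by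
  have hNpos : (0 : ℝ) < N := by exact_mod_cast hN
  rcases hd.2.eq_or_lt with rfl | hd1
  · refine ⟨N - 1, Nat.sub_lt hN one_pos, ?_, ?_⟩
    · rw [div_le_one hNpos]
      exact_mod_cast Nat.sub_le N 1
    · rw [Nat.cast_sub (Nat.one_le_of_lt hN), Nat.cast_one, sub_add_cancel, div_self hNpos.ne']
  · have hdN : 0 ≤ d * N := mul_nonneg hd.1 hNpos.le
    refine ⟨⌊d * N⌋₊, (Nat.floor_lt hdN).2 (by nlinarith), ?_, ?_⟩
    · rw [div_le_iff₀ hNpos]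
      exact Nat.floor_le hdN
    · rw [le_div_iff₀ hNpos]
      exact (Nat.lt_floor_add_one _).le

theorem exists_mem_Ioo_derivWithin_eq_zero {f : ℝ → ℝ} {s : Set ℝ} {u v : ℝ}
    (hf : DifferentiableOn ℝ f s) (huv : u < v) (hsub : Icc u v ⊆ s) (hfuv : f u = f v) :
    ∃ ξ ∈ Ioo u v, derivWithin f s ξ = 0 := by
  obtain ⟨ξ, hξ, hderiv⟩ := exists_deriv_eq_zero huv (hf.continuousOn.mono hsub) hfuv
  have hs : s ∈ nhds ξ :=
    Filter.mem_of_superset (Ioo_mem_nhds hξ.1 hξ.2) (Ioo_subset_Icc_self.trans hsub)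
  exact ⟨ξ, hξ, by rwa [derivWithin_of_mem_nhds hs]⟩

theorem derivWithin_derivWithin_sub {f g : ℝ → ℝ} {s : Set ℝ} {x : ℝ} (hs : UniqueDiffOn ℝ s)
    (hf : ContDiffOn ℝ 2 f s) (hg : ContDiffOn ℝ 2 g s) (hx : x ∈ s) :
    derivWithin (derivWithin (f - g) s) s x =
      derivWithin (derivWithin f s) s x - derivWithin (derivWithin g s) s x := by
  simpa only [iteratedDerivWithin_eq_iterate, Function.iterate_succ, Function.iterate_zero,
    Function.comp_apply, id] using iteratedDerivWithin_sub hx hs (hf x hx) (hg x hx)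

theorem abs_derivWithin_le_of_eq_zero_on_grid {h : ℝ → ℝ} {C : ℝ} {N : ℕ} (hN : 0 < N)
    (hh : ContDiffOn ℝ 2 h (Icc 0 1))
    (hC : ∀ x ∈ Icc (0 : ℝ) 1, |derivWithin (derivWithin h (Icc 0 1)) (Icc 0 1) x| ≤ C)
    (hzero : ∀ i : ℕ, i ≤ N → h (i / N) = 0) {d : ℝ} (hd : d ∈ Icc (0 : ℝ) 1) :
    |derivWithin h (Icc 0 1) d| ≤ C / N := by
  have hNpos : (0 : ℝ) < N := by exact_mod_cast hN
  have hC0 : 0 ≤ C := (abs_nonneg _).trans (hC d hd)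
  obtain ⟨i, hiN, hdi⟩ := exists_nat_lt_mem_Icc_div hd hN
  have hcell : Icc ((i : ℝ) / N) ((i + 1 : ℝ) / N) ⊆ Icc 0 1 := by
    refine Icc_subset_Icc (by positivity) ?_
    rw [div_le_one hNpos]
    exact_mod_cast hiN
  have hends : h (i / N) = h ((i + 1 : ℝ) / N) := by
    rw [hzero i hiN.le, ← hzero (i + 1) hiN, Nat.cast_succ]
  obtain ⟨ξ, hξ, hξ0⟩ := exists_mem_Ioo_derivWithin_eq_zero
    (hh.differentiableOn two_ne_zero)
    (div_lt_div_of_pos_right (lt_add_one _) hNpos) hcell hends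
  have hlip : ‖derivWithin h (Icc 0 1) d - derivWithin h (Icc 0 1) ξ‖ ≤ C * ‖d - ξ‖ :=
    (convex_Icc 0 1).norm_image_sub_le_of_norm_derivWithin_le
      ((hh.derivWithin (uniqueDiffOn_Icc one_pos) le_rfl).differentiableOn one_ne_zero)
      hC (hcell (Ioo_subset_Icc_self hξ)) hd
  have hdξ : |d - ξ| ≤ 1 / N := by
    have hwidth : (i + 1 : ℝ) / N - i / N = 1 / N := by ring
    rw [abs_sub_le_iff]
    constructor <;> linarith [hξ.1, hξ.2, hdi.1, hdi.2]
  rw [hξ0, sub_zero, Real.norm_eq_abs, Real.norm_eq_abs] at hlip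
  calc |derivWithin h (Icc 0 1) d| ≤ C * |d - ξ| := hlip
    _ ≤ C * (1 / N) := by gcongr
    _ = C / N := mul_one_div C N

theorem stmt10_general {P : Type*} (S : P → ℝ → ℝ) (c0 c1 : ℝ)
    (hS : ∀ p, ContDiffOn ℝ 2 (S p) (Set.Icc (0 : ℝ) 1))
    (hc1 : ∀ p, ∀ d ∈ Set.Icc (0 : ℝ) 1,
      |derivWithin (derivWithin (S p) (Set.Icc (0 : ℝ) 1)) (Set.Icc (0 : ℝ) 1) d| ≤ c1)
    (hc0pos : 0 < c0)
    (hc0 : ∀ p p', p ≠ p' → ∃ d ∈ Set.Icc (0 : ℝ) 1,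
      c0 ≤ |derivWithin (S p) (Set.Icc (0 : ℝ) 1) d -
            derivWithin (S p') (Set.Icc (0 : ℝ) 1) d|)
    (N : ℕ) (hN : 3 * c1 / c0 < (N : ℝ)) :
    Function.Injective (fun p : P => fun i : Fin (N + 1) => S p ((i : ℕ) / (N : ℝ))) := by
  intro p p' hpp'
  by_contra hne
  obtain ⟨d, hd, hsep⟩ := hc0 p p' hne
  have hc1nn : 0 ≤ c1 := (abs_nonneg _).trans (hc1 p 0 ⟨le_rfl, zero_le_one⟩)
  have hNpos : (0 : ℝ) < N := lt_of_le_of_lt (by positivity) hN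
  have hzero (i : ℕ) (hi : i ≤ N) : (S p - S p') (i / N) = 0 :=
    sub_eq_zero.2 (congrFun hpp' ⟨i, Nat.lt_succ_of_le hi⟩)
  have hdiff (q : P) : DifferentiableOn ℝ (S q) (Icc 0 1) := (hS q).differentiableOn two_ne_zero
  have hsecond : ∀ x ∈ Icc (0 : ℝ) 1,
      |derivWithin (derivWithin (S p - S p') (Icc 0 1)) (Icc 0 1) x| ≤ 2 * c1 := fun x hx => by
    rw [derivWithin_derivWithin_sub (uniqueDiffOn_Icc one_pos) (hS p) (hS p') hx]
    linarith [abs_sub (derivWithin (derivWithin (S p) (Icc 0 1)) (Icc 0 1) x)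
      (derivWithin (derivWithin (S p') (Icc 0 1)) (Icc 0 1) x), hc1 p x hx, hc1 p' x hx]
  have hfirst := abs_derivWithin_le_of_eq_zero_on_grid (Nat.cast_pos.1 hNpos)
    ((hS p).sub (hS p')) hsecond hzero hd
  rw [derivWithin_fun_sub (hdiff p d hd) (hdiff p' d hd)] at hfirst
  have h3c1 : 3 * c1 < N * c0 := (div_lt_iff₀ hc0pos).1 hN
  have h2c1 : c0 * N ≤ 2 * c1 := (le_div_iff₀ hNpos).1 (hsep.trans hfirst)
  linarith

/-- if pairwise derivative separation `c₀ > 0` holds and the second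
derivatives are bounded by `c₁` on `[0,1]`, then sampling on a grid of spacing
`1/N` with `N > max {1, 3c₁/c₀}` determines the parameter `p` uniquely. -/
theorem stmt10 {P : Type*} [Finite P] (S : P → ℝ → ℝ) (c0 c1 : ℝ)
    (hS : ∀ p, ContDiffOn ℝ 2 (S p) (Set.Icc (0 : ℝ) 1))
    (hc1 : ∀ p, ∀ d ∈ Set.Icc (0 : ℝ) 1,
      |derivWithin (derivWithin (S p) (Set.Icc (0 : ℝ) 1)) (Set.Icc (0 : ℝ) 1) d| ≤ c1)
    (hc0pos : 0 < c0)
    (hc0 : ∀ p p', p ≠ p' → ∃ d ∈ Set.Icc (0 : ℝ) 1,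
      c0 ≤ |derivWithin (S p) (Set.Icc (0 : ℝ) 1) d -
            derivWithin (S p') (Set.Icc (0 : ℝ) 1) d|)
    (N : ℕ) (hN1 : 1 < N) (hN : 3 * c1 / c0 < (N : ℝ)) :
    Function.Injective (fun p : P => fun i : Fin (N + 1) => S p ((i : ℕ) / (N : ℝ))) :=
  stmt10_general S c0 c1 hS hc1 hc0pos hc0 N hN
end

section
/- Let $v : \mathbb{R} \to \mathbb{C}$ be $T$-periodic and extend to an analytic function on the strip $\{|\mathrm{Im}(k)| < a\}$ with $|v(k)| \le C$ there, for some $a > 0$. Then for any integer $M \ge 1$, $\left| \frac{T}{M} \sum_{i=1}^{M} v(Ti/M) - \int_0^T v(k)\,dk \right| \le \frac{2TC}{e^{2\pi a M/T} - 1}$. -/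
/-!
Shifting the contour of the Fourier-coefficient integral to `Im z = ∓b` shows that the
coefficients `c n` of a function analytic and bounded by `C` on the strip `|Im z| < a` decay
like `C e^{-2π a |n| / T}`. The `M`-point rectangle rule integrates `e^{2π i n x / T}` exactly
unless `M ∣ n`, where it returns `T` instead of `0`; hence its error is the aliased sum
`T ∑_{m ≠ 0} c (M m)`, a two-sided geometric series with ratio `e^{-2π a M / T}`.
-/

open Complex Set Finset
open scoped Real

theorem hasSum_ite_eq_zero_pow_natAbs {q : ℝ} (hq₀ : 0 ≤ q) (hq₁ : q < 1) :
    HasSum (fun m : ℤ => if m = 0 then 0 else q ^ m.natAbs) (2 * q / (1 - q)) := by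
  have h : HasSum (fun n : ℕ => q ^ (n + 1)) (q / (1 - q)) := by
    simpa [pow_succ', div_eq_mul_inv] using (hasSum_geometric_of_lt_one hq₀ hq₁).mul_left q
  have hpos : HasSum (fun n : ℕ => if (n + 1 : ℤ) = 0 then 0 else q ^ (n + 1 : ℤ).natAbs)
      (q / (1 - q)) := by
    convert h using 2 with n
    rw [if_neg (by omega)]
    congr 1
  have hneg : HasSum (fun n : ℕ => if (-(n + 1) : ℤ) = 0 then 0 else q ^ (-(n + 1) : ℤ).natAbs)
      (q / (1 - q)) := by
    convert h using 2 with n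
    rw [if_neg (by omega)]
    congr 1
  have := HasSum.of_add_one_of_neg_add_one
    (f := fun m : ℤ => if m = 0 then (0 : ℝ) else q ^ m.natAbs) hpos hneg
  rwa [if_pos rfl, add_zero, ← two_mul, ← mul_div_assoc] at this

theorem summable_pow_natAbs {q : ℝ} (hq₀ : 0 ≤ q) (hq₁ : q < 1) :
    Summable fun m : ℤ => q ^ m.natAbs :=
  Summable.of_nat_of_neg (by simpa using summable_geometric_of_lt_one hq₀ hq₁)
    (by simpa using summable_geometric_of_lt_one hq₀ hq₁)

theorem HasSum.norm_sub_zero_le_of_norm_le_pow_natAbs {E : Type*} [NormedAddCommGroup E]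
    {f : ℤ → E} {s : E} (hf : HasSum f s) {K q : ℝ} (hq₀ : 0 ≤ q) (hq₁ : q < 1)
    (hfq : ∀ m ≠ 0, ‖f m‖ ≤ K * q ^ m.natAbs) :
    ‖s - f 0‖ ≤ K * (2 * q / (1 - q)) := by
  have hupd := hf.update 0 0
  rw [zero_sub, neg_add_eq_sub] at hupd
  refine hupd.norm_le_of_bounded ((hasSum_ite_eq_zero_pow_natAbs hq₀ hq₁).mul_left K) fun m => ?_
  rcases eq_or_ne m 0 with rfl | hm
  · simp
  · simpa [Function.update_of_ne hm, hm] using hfq m hm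

theorem integral_add_mul_I_eq_of_periodic_on_strip {E : Type*} [NormedAddCommGroup E]
    [NormedSpace ℂ E] [CompleteSpace E] {f : ℂ → E} {T a b : ℝ}
    (hf : DifferentiableOn ℂ f {z | |z.im| < a})
    (hper : ∀ z : ℂ, |z.im| < a → f (z + T) = f z) (hb : |b| < a) :
    ∫ x in (0 : ℝ)..T, f (x + b * I) = ∫ x in (0 : ℝ)..T, f x := by
  have hseg : ∀ y ∈ uIcc 0 b, |y| < a := fun y hy => by
    simpa using (abs_sub_left_of_mem_uIcc hy).trans_lt (by simpa using hb)
  have hrect := integral_boundary_rect_eq_zero_of_differentiableOn f 0 (T + b * I) <|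
    hf.mono fun z hz => hseg _ (by simpa using (mem_reProdIm.mp hz).2)
  -- periodicity makes the two vertical sides of the rectangle cancel
  have hsides : ∫ y in (0 : ℝ)..b, f (T + y * I) = ∫ y in (0 : ℝ)..b, f (y * I) :=
    intervalIntegral.integral_congr fun y hy => by
      simpa [add_comm] using hper (y * I) (by simpa using hseg y hy)
  simp only [zero_re, zero_im, add_re, add_im, ofReal_re, ofReal_im, mul_I_re, mul_I_im,
    ofReal_zero, zero_mul, add_zero, zero_add, neg_zero] at hrect
  rw [hsides, add_sub_cancel_right, sub_eq_zero] at hrect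
  exact hrect.symm

theorem norm_exp_neg_mul_add_mul_I (T : ℝ) (n : ℤ) (x b : ℝ) :
    ‖exp (-(2 * π * I * n * (x + b * I) / T))‖ = Real.exp (2 * π * n * b / T) := by
  rw [norm_exp]
  congr 1
  have : -(2 * π * I * n * (x + b * I) / T) =
      ((2 * π * n * b / T : ℝ) : ℂ) + ((-(2 * π * n * x / T) : ℝ) : ℂ) * I := by
    push_cast
    ring_nf
    rw [I_sq]
    ring
  rw [this, add_re, ofReal_re, re_ofReal_mul, I_re, mul_zero, add_zero]

section FourierCoeff

variable {T : ℝ} [hT : Fact (0 < T)]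

theorem fourierCoeff_eq_intervalIntegral_exp_mul {F : AddCircle T → ℂ} {v : ℂ → ℂ}
    (hF : ∀ x : ℝ, F x = v x) (n : ℤ) :
    fourierCoeff F n = (1 / T) • ∫ x in (0 : ℝ)..T, exp (-(2 * π * I * n * x / T)) * v x := by
  rw [fourierCoeff_eq_intervalIntegral F n 0, zero_add]
  congr 1
  refine intervalIntegral.integral_congr fun x _ => ?_
  rw [fourier_coe_apply, hF, smul_eq_mul]
  push_cast
  ring_nf

variable {a C : ℝ} {v : ℂ → ℂ} {F : AddCircle T → ℂ}

theorem norm_fourierCoeff_le_of_strip (hF : ∀ x : ℝ, F x = v x)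
    (hv : DifferentiableOn ℂ v {z | |z.im| < a})
    (hper : ∀ z : ℂ, |z.im| < a → v (z + T) = v z) (hC : ∀ z : ℂ, |z.im| < a → ‖v z‖ ≤ C)
    (n : ℤ) {b : ℝ} (hb : |b| < a) :
    ‖fourierCoeff F n‖ ≤ C * Real.exp (2 * π * n * b / T) := by
  set g : ℂ → ℂ := fun z => exp (-(2 * π * I * n * z / T)) * v z
  have hg : DifferentiableOn ℂ g {z | |z.im| < a} := by
    refine DifferentiableOn.mul ?_ hv
    fun_prop
  have hgper : ∀ z : ℂ, |z.im| < a → g (z + T) = g z := fun z hz => by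
    have : -(2 * π * I * n * (z + T) / T) =
        -(2 * π * I * n * z / T) + (-n : ℤ) * (2 * π * I) := by
      push_cast
      field_simp [ofReal_ne_zero.mpr hT.out.ne']
      ring
    simp only [g, hper z hz, this, Complex.exp_add, exp_int_mul_two_pi_mul_I, mul_one]
  have hgb : ∀ x : ℝ, ‖g (x + b * I)‖ ≤ C * Real.exp (2 * π * n * b / T) := fun x => by
    rw [norm_mul, norm_exp_neg_mul_add_mul_I, mul_comm]
    exact mul_le_mul_of_nonneg_right (hC _ (by simpa using hb)) (Real.exp_nonneg _)
  rw [fourierCoeff_eq_intervalIntegral_exp_mul hF,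
    ← integral_add_mul_I_eq_of_periodic_on_strip hg hgper hb, norm_smul]
  calc ‖1 / T‖ * ‖∫ x in (0 : ℝ)..T, g (x + b * I)‖
      ≤ (1 / T) * (C * Real.exp (2 * π * n * b / T) * |T - 0|) := by
        rw [Real.norm_of_nonneg (one_div_nonneg.mpr hT.out.le)]
        refine mul_le_mul_of_nonneg_left ?_ (one_div_nonneg.mpr hT.out.le)
        exact intervalIntegral.norm_integral_le_of_norm_le_const fun x _ => hgb x
    _ = C * Real.exp (2 * π * n * b / T) := by
        rw [sub_zero, abs_of_pos hT.out]
        field_simp [hT.out.ne']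

theorem norm_fourierCoeff_le_exp_neg_of_strip (ha : 0 < a) (hF : ∀ x : ℝ, F x = v x)
    (hv : DifferentiableOn ℂ v {z | |z.im| < a})
    (hper : ∀ z : ℂ, |z.im| < a → v (z + T) = v z) (hC : ∀ z : ℂ, |z.im| < a → ‖v z‖ ≤ C)
    (n : ℤ) :
    ‖fourierCoeff F n‖ ≤ C * Real.exp (-(2 * π * a / T)) ^ n.natAbs := by
  -- the bound for `|b| < a` passes to the closed interval, whose endpoint `b = -a sign n` is optimal
  have hIcc : Icc (-a) a ⊆ {b : ℝ | ‖fourierCoeff F n‖ ≤ C * Real.exp (2 * π * n * b / T)} := by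
    rw [← closure_Ioo (by linarith),
      (isClosed_le continuous_const (by fun_prop)).closure_subset_iff]
    exact fun b hb => norm_fourierCoeff_le_of_strip hF hv hper hC n (abs_lt.mpr hb)
  rw [← Real.exp_nat_mul, Nat.cast_natAbs, Int.cast_abs]
  rcases le_or_gt 0 n with hn | hn
  · refine (hIcc ⟨le_rfl, neg_le_self ha.le⟩).trans_eq ?_
    rw [abs_of_nonneg (by exact_mod_cast hn)]
    ring_nf
  · refine (hIcc ⟨neg_le_self ha.le, le_rfl⟩).trans_eq ?_
    rw [abs_of_neg (by exact_mod_cast hn)]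
    ring_nf

end FourierCoeff

section Aliasing

variable {T : ℝ} [hT : Fact (0 < T)]

theorem sum_fourier_grid (n : ℤ) {M : ℕ} (hM : M ≠ 0) :
    ∑ i ∈ range M, fourier n ((T * (i + 1) / M : ℝ) : AddCircle T) =
      if (M : ℤ) ∣ n then (M : ℂ) else 0 := by
  have hM' : (M : ℂ) ≠ 0 := Nat.cast_ne_zero.mpr hM
  have h2πI : 2 * π * I ≠ 0 := by simp [Real.pi_ne_zero]
  set ζ := exp (2 * π * I * n / M)
  have hgrid : ∀ i : ℕ, fourier n ((T * (i + 1) / M : ℝ) : AddCircle T) = ζ ^ (i + 1) := by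
    intro i
    rw [fourier_coe_apply, ← exp_nat_mul]
    congr 1
    push_cast
    field_simp [ofReal_ne_zero.mpr hT.out.ne']
  simp only [hgrid]
  split_ifs with hdvd
  · obtain ⟨k, rfl⟩ := hdvd
    have hζ : ζ = 1 := by
      rw [exp_eq_one_iff]
      exact ⟨k, by push_cast; field_simp⟩
    simp [hζ]
  · have hζ : ζ ≠ 1 := by
      rw [Ne, exp_eq_one_iff]
      rintro ⟨k, hk⟩
      refine hdvd ⟨k, ?_⟩
      have : (n : ℂ) = M * k := by
        rw [div_eq_iff hM'] at hk
        exact mul_left_cancel₀ h2πI (by linear_combination hk)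
      exact_mod_cast this
    have hζM : ζ ^ M = 1 := by
      rw [← exp_nat_mul, ← exp_int_mul_two_pi_mul_I n]
      congr 1
      field_simp
    simp_rw [pow_succ', ← mul_sum, geom_sum_eq hζ, hζM, sub_self, zero_div, mul_zero]

theorem hasSum_fourierCoeff_mul_eq_average_grid {F : C(AddCircle T, ℂ)}
    (hF : Summable (fourierCoeff F)) {M : ℕ} (hM : M ≠ 0) :
    HasSum (fun m : ℤ => fourierCoeff F (M * m))
      ((M : ℂ)⁻¹ * ∑ i ∈ range M, F (T * (i + 1) / M : ℝ)) := by
  have hsum := hasSum_sum fun i (_ : i ∈ range M) =>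
    has_pointwise_sum_fourier_series_of_summable hF ((T * (i + 1) / M : ℝ) : AddCircle T)
  simp only [smul_eq_mul, ← mul_sum, sum_fourier_grid _ hM, mul_ite, mul_zero] at hsum
  have hinj : Function.Injective fun m : ℤ => (M : ℤ) * m :=
    mul_right_injective₀ (Int.natCast_ne_zero.mpr hM)
  have := (hinj.hasSum_iff fun n hn => if_neg fun ⟨m, hm⟩ => hn ⟨m, hm.symm⟩).mpr hsum
  simpa [Function.comp_def, mul_comm _ (M : ℂ), Nat.cast_ne_zero.mpr hM] using
    this.mul_left (M : ℂ)⁻¹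

theorem norm_average_grid_sub_fourierCoeff_zero_le {F : C(AddCircle T, ℂ)} {K q : ℝ}
    (hq₀ : 0 ≤ q) (hq₁ : q < 1) (hF : ∀ n, ‖fourierCoeff F n‖ ≤ K * q ^ n.natAbs)
    {M : ℕ} (hM : M ≠ 0) :
    ‖(M : ℂ)⁻¹ * ∑ i ∈ range M, F (T * (i + 1) / M : ℝ) - fourierCoeff F 0‖ ≤
      K * (2 * q ^ M / (1 - q ^ M)) := by
  have halias := hasSum_fourierCoeff_mul_eq_average_grid
    (((summable_pow_natAbs hq₀ hq₁).mul_left K).of_norm_bounded hF) hM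
  simpa using halias.norm_sub_zero_le_of_norm_le_pow_natAbs (pow_nonneg hq₀ M)
    (pow_lt_one₀ hq₀ hq₁ hM) fun m _ => by simpa [Int.natAbs_mul, pow_mul] using hF (M * m)

end Aliasing

/-- Trefethen: exponential accuracy of the periodic trapezoidal
rule for a `T`-periodic function analytic and bounded by `C` on the strip
`|Im k| < a`. -/
theorem stmt16 (T a C : ℝ) (hT : 0 < T) (ha : 0 < a)
    (v : ℂ → ℂ)
    (hv : DifferentiableOn ℂ v {z : ℂ | |z.im| < a})
    (hper : ∀ z : ℂ, |z.im| < a → v (z + (T : ℂ)) = v z)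
    (hC : ∀ z : ℂ, |z.im| < a → ‖v z‖ ≤ C)
    (M : ℕ) (hM : 1 ≤ M) :
    ‖((T / M : ℝ) : ℂ) * (∑ i ∈ Finset.range M, v ((T * ((i : ℝ) + 1) / M : ℝ))) -
        ∫ k in (0 : ℝ)..T, v (k : ℂ)‖ ≤
      2 * T * C / (Real.exp (2 * Real.pi * a * M / T) - 1) := by
  have : Fact (0 < T) := ⟨hT⟩
  have hreal : ∀ x : ℝ, |(x : ℂ).im| < a := by simpa using ha
  have hvper : Function.Periodic (fun x : ℝ => v x) T := fun x => by
    simpa using hper x (hreal x)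
  let F : C(AddCircle T, ℂ) :=
    ⟨hvper.lift, (hv.continuousOn.comp_continuous continuous_ofReal hreal).quotient_liftOn' _⟩
  have hF : ∀ x : ℝ, F x = v x := hvper.lift_coe
  set q := Real.exp (-(2 * π * a / T))
  have hq₁ : q < 1 := Real.exp_lt_one_iff.mpr (by simp only [neg_lt_zero]; positivity)
  have herr := norm_average_grid_sub_fourierCoeff_zero_le (Real.exp_nonneg _) hq₁
    (norm_fourierCoeff_le_exp_neg_of_strip ha hF hv hper hC) (by omega : M ≠ 0)
  have hqM : q ^ M = (Real.exp (2 * π * a * M / T))⁻¹ := by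
    rw [← Real.exp_nat_mul, ← Real.exp_neg]
    ring_nf
  have hexp : 1 < Real.exp (2 * π * a * M / T) := Real.one_lt_exp_iff.mpr (by positivity)
  calc _ = ‖(T : ℂ) * ((M : ℂ)⁻¹ * ∑ i ∈ range M, F (T * (i + 1) / M : ℝ) - fourierCoeff F 0)‖ := by
        rw [fourierCoeff_eq_intervalIntegral_exp_mul hF]
        simp only [hF, Int.cast_zero, mul_zero, zero_mul, zero_div, neg_zero, Complex.exp_zero,
          one_mul, real_smul]
        congr 1
        push_cast
        field_simp [ofReal_ne_zero.mpr hT.ne']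
    _ ≤ T * (C * (2 * q ^ M / (1 - q ^ M))) := by
        rw [norm_mul, norm_real, Real.norm_of_nonneg hT.le]
        gcongr
    _ = _ := by
        rw [hqM]
        field_simp [(sub_pos.mpr hexp).ne']
end
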